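/- arXiv:1005.2660 — 9 statements merged into one kernel-verified Lean document; each statement's English description precedes it below -/
import Mathlib

section
/- Let u, v, z : ℝ² → ℝ be smooth functions satisfying u_t = v - u·u_x, v_t = z - u·v_x, z_t = -u·z_x, and set D_t = ∂/∂t + u·∂/∂x. Then the function B₂ := v - z·t satisfies D_t B₂ = 0. -/
noncomputable def pt (f : ℝ × ℝ → ℝ) : ℝ × ℝ → ℝ := fun p => fderiv ℝ f p (1, 0)
noncomputable def px (f : ℝ × ℝ → ℝ) : ℝ × ℝ → ℝ := fun p => fderiv ℝ f p (0, 1)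
noncomputable def Dt (u f : ℝ × ℝ → ℝ) : ℝ × ℝ → ℝ := fun p => pt f p + u p * px f p

theorem riemann_N3_B2 (u v z : ℝ × ℝ → ℝ)
    (hu : ContDiff ℝ (⊤ : ℕ∞) u) (hv : ContDiff ℝ (⊤ : ℕ∞) v) (hz : ContDiff ℝ (⊤ : ℕ∞) z)
    (h1 : ∀ p, pt u p = v p - u p * px u p)
    (h2 : ∀ p, pt v p = z p - u p * px v p)
    (h3 : ∀ p, pt z p = -(u p * px z p)) :
    ∀ p, Dt u (fun q => v q - z q * q.1) p = 0 := by
  intro p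
  have hvd : DifferentiableAt ℝ v p := (hv.differentiable (by simp)).differentiableAt
  have hzd : DifferentiableAt ℝ z p := (hz.differentiable (by simp)).differentiableAt
  have hfst : DifferentiableAt ℝ (fun q : ℝ × ℝ => q.1) p := differentiableAt_fst
  have key : ∀ w : ℝ × ℝ, fderiv ℝ (fun q => v q - z q * q.1) p w
      = fderiv ℝ v p w - (z p * fderiv ℝ (fun q : ℝ × ℝ => q.1) p w
        + p.1 * fderiv ℝ z p w) := by
    intro w
    rw [fderiv_fun_sub hvd (hzd.fun_mul hfst), fderiv_fun_mul hzd hfst]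
    simp
  have hft : fderiv ℝ (fun q : ℝ × ℝ => q.1) p ((1 : ℝ), (0 : ℝ)) = 1 := by
    simp [fderiv_fst]
  have hfx : fderiv ℝ (fun q : ℝ × ℝ => q.1) p ((0 : ℝ), (1 : ℝ)) = 0 := by
    simp [fderiv_fst]
  have e2 := h2 p
  have e3 := h3 p
  simp only [Dt, pt, px] at e2 e3 ⊢
  rw [key, key, hft, hfx]
  linear_combination e2 - p.1 * e3
end

section
/- Let u, v, z : ℝ² → ℝ be smooth functions satisfying u_t = v - u·u_x, v_t = z - u·v_x, z_t = -u·z_x, and D_t = ∂/∂t + u·∂/∂x. Then B₁ := u - t·v + z·t²/2 satisfies D_t B₁ = 0. -/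
lemma fderiv_B (u v z : ℝ × ℝ → ℝ)
    (hu : ContDiff ℝ (⊤ : ℕ∞) u) (hv : ContDiff ℝ (⊤ : ℕ∞) v) (hz : ContDiff ℝ (⊤ : ℕ∞) z)
    (p w : ℝ × ℝ) :
    fderiv ℝ (fun q => u q - q.1 * v q + z q * q.1 ^ 2 / 2) p w =
      fderiv ℝ u p w - (w.1 * v p + p.1 * fderiv ℝ v p w)
      + (fderiv ℝ z p w * p.1 ^ 2 + z p * (p.1 * w.1 + w.1 * p.1)) / 2 := by
  have hud : DifferentiableAt ℝ u p := (hu.differentiable (by simp)) p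
  have hvd : DifferentiableAt ℝ v p := (hv.differentiable (by simp)) p
  have hzd : DifferentiableAt ℝ z p := (hz.differentiable (by simp)) p
  have d1 : DifferentiableAt ℝ (fun q : ℝ × ℝ => q.1) p := differentiableAt_fst
  have d2 : DifferentiableAt ℝ (fun q : ℝ × ℝ => q.1 * v q) p := d1.mul hvd
  have d3 : DifferentiableAt ℝ (fun q : ℝ × ℝ => q.1 * q.1) p := d1.mul d1
  have d4 : DifferentiableAt ℝ (fun q => z q * (q.1 * q.1)) p := hzd.mul d3
  have d5 : DifferentiableAt ℝ (fun q => z q * (q.1 * q.1) * (1/2)) p := d4.mul_const _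
  have heq : (fun q : ℝ × ℝ => u q - q.1 * v q + z q * q.1 ^ 2 / 2)
      = fun q => u q - q.1 * v q + z q * (q.1 * q.1) * (1/2) := by
    funext q; ring
  rw [heq, fderiv_fun_add (hud.fun_sub d2) d5, fderiv_fun_sub hud d2, fderiv_fun_mul d1 hvd,
    fderiv_mul_const d4, fderiv_fun_mul hzd d3, fderiv_fun_mul d1 d1]
  have hf : fderiv ℝ (fun q : ℝ × ℝ => q.1) p w = w.1 := by
    simp [fderiv_fst]
  simp only [ContinuousLinearMap.add_apply, ContinuousLinearMap.sub_apply,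
    ContinuousLinearMap.smul_apply, ContinuousLinearMap.coe_smul', Pi.smul_apply,
    smul_eq_mul, hf]
  ring

theorem riemann_N3_B1 (u v z : ℝ × ℝ → ℝ)
    (hu : ContDiff ℝ (⊤ : ℕ∞) u) (hv : ContDiff ℝ (⊤ : ℕ∞) v) (hz : ContDiff ℝ (⊤ : ℕ∞) z)
    (h1 : ∀ p, pt u p = v p - u p * px u p)
    (h2 : ∀ p, pt v p = z p - u p * px v p)
    (h3 : ∀ p, pt z p = -(u p * px z p)) :
    ∀ p, Dt u (fun q => u q - q.1 * v q + z q * q.1 ^ 2 / 2) p = 0 := by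
  intro p
  have ht := fderiv_B u v z hu hv hz p (1, 0)
  have hx := fderiv_B u v z hu hv hz p (0, 1)
  have e1 := h1 p
  have e2 := h2 p
  have e3 := h3 p
  simp only [Dt, pt, px] at *
  rw [ht, hx]
  rw [e1, e2, e3]; ring
end

section
/- Let u, v, z : ℝ² → ℝ be smooth functions satisfying u_t = v - u·u_x, v_t = z - u·v_x, z_t = -u·z_x, and D_t = ∂/∂t + u·∂/∂x. Then B₃ := x - t·u + v·t²/2 - z·t³/6 satisfies D_t B₃ = 0. -/
theorem riemann_N3_B3 (u v z : ℝ × ℝ → ℝ)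
    (hu : ContDiff ℝ (⊤ : ℕ∞) u) (hv : ContDiff ℝ (⊤ : ℕ∞) v) (hz : ContDiff ℝ (⊤ : ℕ∞) z)
    (h1 : ∀ p, pt u p = v p - u p * px u p)
    (h2 : ∀ p, pt v p = z p - u p * px v p)
    (h3 : ∀ p, pt z p = -(u p * px z p)) :
    ∀ p, Dt u (fun q => q.2 - q.1 * u q + v q * q.1 ^ 2 / 2 - z q * q.1 ^ 3 / 6) p = 0 := by
  intro p
  have hu' : HasFDerivAt u (fderiv ℝ u p) p :=
    (hu.differentiable (by simp) p).hasFDerivAt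
  have hv' : HasFDerivAt v (fderiv ℝ v p) p :=
    (hv.differentiable (by simp) p).hasFDerivAt
  have hz' : HasFDerivAt z (fderiv ℝ z p) p :=
    (hz.differentiable (by simp) p).hasFDerivAt
  have hfst : HasFDerivAt (fun q : ℝ × ℝ => q.1) (ContinuousLinearMap.fst ℝ ℝ ℝ) p :=
    hasFDerivAt_fst
  have hsnd : HasFDerivAt (fun q : ℝ × ℝ => q.2) (ContinuousLinearMap.snd ℝ ℝ ℝ) p :=
    hasFDerivAt_snd
  have hp2 := hfst.fun_mul hfst
  rw [show (fun q : ℝ × ℝ => q.1 * q.1) = (fun q : ℝ × ℝ => q.1 ^ 2) from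
    funext fun q => (sq q.1).symm] at hp2
  have hp3 := hp2.fun_mul hfst
  rw [show (fun q : ℝ × ℝ => q.1 ^ 2 * q.1) = (fun q : ℝ × ℝ => q.1 ^ 3) from
    funext fun q => (pow_succ q.1 2).symm] at hp3
  have hA := (hv'.fun_mul hp2).mul_const ((2:ℝ)⁻¹)
  rw [show (fun q : ℝ × ℝ => v q * q.1 ^ 2 * (2:ℝ)⁻¹) = (fun q : ℝ × ℝ => v q * q.1 ^ 2 / 2) from
    funext fun q => (div_eq_mul_inv _ _).symm] at hA
  have hB := (hz'.fun_mul hp3).mul_const ((6:ℝ)⁻¹)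
  rw [show (fun q : ℝ × ℝ => z q * q.1 ^ 3 * (6:ℝ)⁻¹) = (fun q : ℝ × ℝ => z q * q.1 ^ 3 / 6) from
    funext fun q => (div_eq_mul_inv _ _).symm] at hB
  have hF := ((hsnd.fun_sub (hfst.fun_mul hu')).fun_add hA).fun_sub hB
  simp only [Dt, pt, px, hF.fderiv]
  have e1 := h1 p
  have e2 := h2 p
  have e3 := h3 p
  simp only [pt, px] at e1 e2 e3
  simp only [ContinuousLinearMap.sub_apply, ContinuousLinearMap.add_apply,
    ContinuousLinearMap.smul_apply, ContinuousLinearMap.coe_fst', ContinuousLinearMap.coe_snd',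
    smul_eq_mul]
  rw [e1, e2, e3]; ring
end

section
/- Let u, v, z : ℝ² → ℝ be smooth functions with u_t = v - u·u_x, v_t = z - u·v_x, z_t = -u·z_x, D_t = ∂/∂t + u·∂/∂x, and suppose z(t,x) ≠ 0 for all (t,x). Then b₁ := u/z - v²/(2z²) satisfies D_t b₁ = 0. -/
lemma dir_key (u v z : ℝ × ℝ → ℝ)
    (hu : ContDiff ℝ (⊤ : ℕ∞) u) (hv : ContDiff ℝ (⊤ : ℕ∞) v) (hz : ContDiff ℝ (⊤ : ℕ∞) z)
    (hz0 : ∀ p, z p ≠ 0) (p : ℝ × ℝ) (w : ℝ × ℝ) :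
    fderiv ℝ (fun q => u q / z q - v q ^ 2 / (2 * z q ^ 2)) p w * (2 * z p ^ 2)
      = 2 * (fderiv ℝ u p w * z p + u p * fderiv ℝ z p w) - 2 * v p * fderiv ℝ v p w
        - (u p / z p - v p ^ 2 / (2 * z p ^ 2)) * (4 * z p * fderiv ℝ z p w) := by
  have hud : DifferentiableAt ℝ u p := hu.differentiable (by simp) |>.differentiableAt
  have hvd : DifferentiableAt ℝ v p := hv.differentiable (by simp) |>.differentiableAt
  have hzd : DifferentiableAt ℝ z p := hz.differentiable (by simp) |>.differentiableAt
  set F : ℝ × ℝ → ℝ := fun q => u q / z q - v q ^ 2 / (2 * z q ^ 2) with hF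
  have hFd : DifferentiableAt ℝ F p := by
    apply DifferentiableAt.sub
    · exact hud.mul (hzd.inv (hz0 p))
    · exact (hvd.pow 2).mul (((hzd.pow 2).const_mul 2).inv (mul_ne_zero two_ne_zero (pow_ne_zero 2 (hz0 p))))
  have hGd : DifferentiableAt ℝ (fun q => 2 * z q ^ 2) p := (hzd.pow 2).const_mul 2
  have hEq : (fun q => F q * (2 * z q ^ 2)) = fun q => 2 * (u q * z q) - v q ^ 2 := by
    funext q
    have := hz0 q
    rw [hF]; field_simp
  have h1 := congrArg (fun f => fderiv ℝ f p w) hEq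
  rw [fderiv_fun_mul hFd hGd] at h1
  rw [show (fun q => 2 * (u q * z q) - v q ^ 2) = fun q => 2 * (u q * z q) - v q * v q by
    funext q; ring] at h1
  rw [fderiv_fun_sub ((hud.fun_mul hzd).const_mul 2) (hvd.fun_mul hvd)] at h1
  rw [fderiv_const_mul (hud.fun_mul hzd) 2, fderiv_fun_mul hud hzd, fderiv_fun_mul hvd hvd] at h1
  rw [show (fun q => 2 * z q ^ 2) = fun q => 2 * (z q * z q) by funext q; ring] at h1
  rw [fderiv_const_mul (hzd.fun_mul hzd) 2, fderiv_fun_mul hzd hzd] at h1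
  simp only [ContinuousLinearMap.add_apply, ContinuousLinearMap.smul_apply,
    ContinuousLinearMap.coe_smul', Pi.smul_apply, ContinuousLinearMap.sub_apply,
    smul_eq_mul] at h1
  have hzp := hz0 p
  have hFp : F p = (2 * (u p * z p) - v p ^ 2) / (2 * z p ^ 2) := by
    rw [hF]; field_simp
  rw [hFp] at h1
  rw [show u p / z p - v p ^ 2 / (2 * z p ^ 2)
      = (2 * (u p * z p) - v p ^ 2) / (2 * z p ^ 2) from by field_simp]
  linear_combination h1

theorem riemann_N3_b1 (u v z : ℝ × ℝ → ℝ)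
    (hu : ContDiff ℝ (⊤ : ℕ∞) u) (hv : ContDiff ℝ (⊤ : ℕ∞) v) (hz : ContDiff ℝ (⊤ : ℕ∞) z)
    (hz0 : ∀ p, z p ≠ 0)
    (h1 : ∀ p, pt u p = v p - u p * px u p)
    (h2 : ∀ p, pt v p = z p - u p * px v p)
    (h3 : ∀ p, pt z p = -(u p * px z p)) :
    ∀ p, Dt u (fun q => u q / z q - v q ^ 2 / (2 * z q ^ 2)) p = 0 := by
  intro p
  have hA := dir_key u v z hu hv hz hz0 p (1, 0)
  have hB := dir_key u v z hu hv hz hz0 p (0, 1)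
  have h1p := h1 p
  have h2p := h2 p
  have h3p := h3 p
  simp only [pt, px] at h1p h2p h3p
  have hzsq : (2 : ℝ) * z p ^ 2 ≠ 0 := mul_ne_zero two_ne_zero (pow_ne_zero 2 (hz0 p))
  have key : Dt u (fun q => u q / z q - v q ^ 2 / (2 * z q ^ 2)) p * (2 * z p ^ 2) = 0 := by
    simp only [Dt, pt, px]
    rw [add_mul]
    linear_combination hA + u p * hB + (2 * z p) * h1p + (-2 * v p) * h2p
      + (2 * u p - (u p / z p - v p ^ 2 / (2 * z p ^ 2)) * 4 * z p
         + u p * (2 * u p - (u p / z p - v p ^ 2 / (2 * z p ^ 2)) * 4 * z p) * 0) * h3p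
  exact (mul_eq_zero.mp key).resolve_right hzsq
end

section
/- Let u, v, z : ℝ² → ℝ be smooth with u_t = v - u·u_x, v_t = z - u·v_x, z_t = -u·z_x, D_t = ∂/∂t + u·∂/∂x, and suppose z_x(t,x) ≠ 0 for all (t,x). Then b̃₂ := v_x/z_x satisfies D_t b̃₂ = 1. -/
lemma contDiff_pderiv (f : ℝ × ℝ → ℝ) (hf : ContDiff ℝ (⊤ : ℕ∞) f) (w : ℝ × ℝ) :
    ContDiff ℝ (⊤ : ℕ∞) (fun q => fderiv ℝ f q w) :=
  (hf.fderiv_right (by simp)).clm_apply contDiff_const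

lemma pderiv_comm (f : ℝ × ℝ → ℝ) (hf : ContDiff ℝ (⊤ : ℕ∞) f) (p w w' : ℝ × ℝ) :
    fderiv ℝ (fun q => fderiv ℝ f q w) p w' = fderiv ℝ (fun q => fderiv ℝ f q w') p w := by
  have hd : ContDiff ℝ (⊤ : ℕ∞) (fderiv ℝ f) := hf.fderiv_right (by simp)
  have h1 : ∀ w : ℝ × ℝ, fderiv ℝ (fun q => fderiv ℝ f q w) p
      = (fderiv ℝ (fderiv ℝ f) p).flip w := by
    intro w
    rw [fderiv_clm_apply (hd.differentiable (by simp) p) (differentiableAt_const w)]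
    simp
  rw [h1, h1]
  have hsym : IsSymmSndFDerivAt ℝ f p := by
    have h2 : ContDiffAt ℝ 2 f p := hf.contDiffAt.of_le (WithTop.coe_le_coe.mpr le_top)
    exact h2.isSymmSndFDerivAt (by simp [minSmoothness_of_isRCLikeNormedField])
  simpa using hsym w' w

lemma fderiv_mul_apply (a b : ℝ × ℝ → ℝ) (p w : ℝ × ℝ)
    (ha : DifferentiableAt ℝ a p) (hb : DifferentiableAt ℝ b p) :
    fderiv ℝ (fun q => a q * b q) p w = a p * fderiv ℝ b p w + b p * fderiv ℝ a p w := by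
  rw [fderiv_fun_mul ha hb]; simp

lemma fderiv_sub_apply (a b : ℝ × ℝ → ℝ) (p w : ℝ × ℝ)
    (ha : DifferentiableAt ℝ a p) (hb : DifferentiableAt ℝ b p) :
    fderiv ℝ (fun q => a q - b q) p w = fderiv ℝ a p w - fderiv ℝ b p w := by
  rw [fderiv_fun_sub ha hb]; simp

theorem riemann_N3_btilde2 (u v z : ℝ × ℝ → ℝ)
    (hu : ContDiff ℝ (⊤ : ℕ∞) u) (hv : ContDiff ℝ (⊤ : ℕ∞) v) (hz : ContDiff ℝ (⊤ : ℕ∞) z)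
    (hzx : ∀ p, px z p ≠ 0)
    (h1 : ∀ p, pt u p = v p - u p * px u p)
    (h2 : ∀ p, pt v p = z p - u p * px v p)
    (h3 : ∀ p, pt z p = -(u p * px z p)) :
    ∀ p, Dt u (fun q => px v q / px z q) p = 1 := by
  intro p
  set g : ℝ × ℝ → ℝ := fun q => px v q / px z q with hg
  -- differentiability facts
  have hpxv : ContDiff ℝ (⊤ : ℕ∞) (px v) := contDiff_pderiv v hv (0, 1)
  have hpxz : ContDiff ℝ (⊤ : ℕ∞) (px z) := contDiff_pderiv z hz (0, 1)
  have hpxvd : ∀ q, DifferentiableAt ℝ (px v) q := fun q => (hpxv.differentiable (by simp) q)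
  have hpxzd : ∀ q, DifferentiableAt ℝ (px z) q := fun q => (hpxz.differentiable (by simp) q)
  have hud : ∀ q, DifferentiableAt ℝ u q := fun q => (hu.differentiable (by simp) q)
  have hzd : ∀ q, DifferentiableAt ℝ z q := fun q => (hz.differentiable (by simp) q)
  have hgd : ∀ q, DifferentiableAt ℝ g q := by
    intro q
    have : DifferentiableAt ℝ (fun q => px v q * (px z q)⁻¹) q :=
      (hpxvd q).mul ((hpxzd q).inv (hzx q))
    simpa [hg, div_eq_mul_inv] using this
  -- px v = g * px z
  have hfun : px v = fun q => g q * px z q := by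
    funext q
    simp [hg, div_mul_cancel₀ (px v q) (hzx q)]
  have g5 : g p * px z p = px v p := by
    simp [hg, div_mul_cancel₀ (px v p) (hzx p)]
  -- eq1 : pt (px v) via the product
  have eq1 : pt (px v) p = g p * pt (px z) p + px z p * pt g p := by
    conv_lhs => rw [hfun]
    exact fderiv_mul_apply g (px z) p (1, 0) (hgd p) (hpxzd p)
  -- eq2 : px (px v) via the product
  have eq2 : px (px v) p = g p * px (px z) p + px z p * px g p := by
    conv_lhs => rw [hfun]
    exact fderiv_mul_apply g (px z) p (0, 1) (hgd p) (hpxzd p)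
  -- eq3 : pt (px v) via commutation and h2
  have eq3 : pt (px v) p = px z p - (u p * px (px v) p + px v p * px u p) := by
    have hc : pt (px v) p = px (pt v) p := pderiv_comm v hv p (0, 1) (1, 0)
    rw [hc]
    have hptv : pt v = fun q => z q - u q * px v q := funext h2
    rw [hptv]
    show fderiv ℝ (fun q => z q - u q * px v q) p (0, 1) = _
    rw [fderiv_sub_apply z (fun q => u q * px v q) p (0, 1) (hzd p)
      ((hud p).mul (hpxvd p)),
      fderiv_mul_apply u (px v) p (0, 1) (hud p) (hpxvd p)]
    rfl
  -- eq4 : pt (px z) via commutation and h3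
  have eq4 : pt (px z) p = -(u p * px (px z) p + px z p * px u p) := by
    have hc : pt (px z) p = px (pt z) p := pderiv_comm z hz p (0, 1) (1, 0)
    rw [hc]
    have hptz : pt z = fun q => -(u q * px z q) := funext h3
    rw [hptz]
    show fderiv ℝ (fun q => -(u q * px z q)) p (0, 1) = _
    rw [show (fun q => -(u q * px z q)) = fun q => -((fun q => u q * px z q) q) from rfl,
      fderiv_fun_neg, ContinuousLinearMap.neg_apply,
      fderiv_mul_apply u (px z) p (0, 1) (hud p) (hpxzd p)]
    rfl
  -- combine
  have key : (pt g p + u p * px g p) * px z p = px z p := by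
    linear_combination (eq3 - eq1) - g p * eq4 - u p * eq2 + px u p * g5
  have : (pt g p + u p * px g p) * px z p = 1 * px z p := by rw [one_mul]; exact key
  have hfin := mul_right_cancel₀ (hzx p) this
  simpa [Dt] using hfin
end

section
/- Let u, v, z : ℝ² → ℝ be smooth with u_t = v - u·u_x, v_t = z - u·v_x, z_t = -u·z_x, D_t = ∂/∂t + u·∂/∂x, and suppose z_x ≠ 0 everywhere. Then b₂ := u_x/z_x - v_x²/(2z_x²) satisfies D_t b₂ = 0. -/
lemma smooth_px {f : ℝ × ℝ → ℝ} (hf : ContDiff ℝ (⊤ : ℕ∞) f) : ContDiff ℝ (⊤ : ℕ∞) (px f) :=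
  (hf.fderiv_right ((by simp))).clm_apply contDiff_const

lemma dt_dir (u F : ℝ × ℝ → ℝ) (p : ℝ × ℝ) :
    fderiv ℝ F p (1, u p) = pt F p + u p * px F p := by
  have h : ((1 : ℝ), u p) = (1, 0) + u p • ((0 : ℝ), (1 : ℝ)) := by simp
  rw [h, map_add, map_smul]
  rfl

lemma clairaut {f : ℝ × ℝ → ℝ} (hf : ContDiff ℝ (⊤ : ℕ∞) f) (p : ℝ × ℝ) :
    pt (px f) p = px (pt f) p := by
  have hd : DifferentiableAt ℝ (fderiv ℝ f) p :=
    (hf.fderiv_right (m := (⊤ : ℕ∞)) ((by simp))).differentiable (by simp) p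
  have key : ∀ a b : ℝ × ℝ,
      fderiv ℝ (fun q => fderiv ℝ f q a) p b = fderiv ℝ (fderiv ℝ f) p b a := by
    intro a b
    rw [fderiv_clm_apply hd (differentiableAt_const a)]
    simp
  show fderiv ℝ (fun q => fderiv ℝ f q (0, 1)) p (1, 0)
      = fderiv ℝ (fun q => fderiv ℝ f q (1, 0)) p (0, 1)
  rw [key, key]
  exact hf.contDiffAt.isSymmSndFDerivAt (by simp [minSmoothness_of_isRCLikeNormedField]; exact WithTop.coe_le_coe.mpr (le_top : (2 : ℕ∞) ≤ ⊤)) (1, 0) (0, 1)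

lemma keylaw (u f g : ℝ × ℝ → ℝ) (hu : ContDiff ℝ (⊤ : ℕ∞) u) (hf : ContDiff ℝ (⊤ : ℕ∞) f)
    (hg : ContDiff ℝ (⊤ : ℕ∞) g) (h : ∀ p, pt f p = g p - u p * px f p) (p : ℝ × ℝ) :
    fderiv ℝ (px f) p (1, u p) = px g p - px u p * px f p := by
  have hpf := smooth_px hf
  rw [dt_dir, clairaut hf]
  have hfe : pt f = fun q => g q - u q * px f q := funext h
  have hdu : DifferentiableAt ℝ u p := hu.differentiable (by simp) p
  have hdpf : DifferentiableAt ℝ (px f) p := hpf.differentiable (by simp) p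
  have : px (pt f) p = px g p - (u p * px (px f) p + px f p * px u p) := by
    show fderiv ℝ (pt f) p (0, 1) = _
    rw [hfe, fderiv_fun_sub (hg.differentiable (by simp) p) (hdu.fun_mul hdpf),
      fderiv_fun_mul hdu hdpf]
    simp [px]
  rw [this]
  ring

theorem riemann_N3_b2 (u v z : ℝ × ℝ → ℝ)
    (hu : ContDiff ℝ (⊤ : ℕ∞) u) (hv : ContDiff ℝ (⊤ : ℕ∞) v) (hz : ContDiff ℝ (⊤ : ℕ∞) z)
    (hzx : ∀ p, px z p ≠ 0)
    (h1 : ∀ p, pt u p = v p - u p * px u p)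
    (h2 : ∀ p, pt v p = z p - u p * px v p)
    (h3 : ∀ p, pt z p = -(u p * px z p)) :
    ∀ p, Dt u (fun q => px u q / px z q - px v q ^ 2 / (2 * px z q ^ 2)) p = 0 := by
  intro p
  set B : ℝ × ℝ → ℝ := fun q => px u q / px z q - px v q ^ 2 / (2 * px z q ^ 2) with hB
  -- differentiability facts
  have hU := smooth_px hu
  have hV := smooth_px hv
  have hZ := smooth_px hz
  have hdU : DifferentiableAt ℝ (px u) p := hU.differentiable (by simp) p
  have hdV : DifferentiableAt ℝ (px v) p := hV.differentiable (by simp) p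
  have hdZ : DifferentiableAt ℝ (px z) p := hZ.differentiable (by simp) p
  have hdu : DifferentiableAt ℝ u p := hu.differentiable (by simp) p
  have hdB : DifferentiableAt ℝ B p := by
    apply DifferentiableAt.sub
    · rw [show (fun q => px u q / px z q) = fun q => px u q * (px z q)⁻¹ by
        funext q; rw [div_eq_mul_inv]]
      exact hdU.mul (hdZ.inv (hzx p))
    · rw [show (fun q => px v q ^ 2 / (2 * px z q ^ 2))
          = fun q => px v q ^ 2 * (2 * px z q ^ 2)⁻¹ by
        funext q; rw [div_eq_mul_inv]]
      exact (hdV.pow 2).mul (((hdZ.pow 2).const_mul 2).inv (by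
        have := hzx p; simp [this]))
  -- the directional derivative values
  have EU : fderiv ℝ (px u) p (1, u p) = px v p - px u p * px u p :=
    keylaw u u v hu hu hv h1 p
  have EV : fderiv ℝ (px v) p (1, u p) = px z p - px u p * px v p :=
    keylaw u v z hu hv hz h2 p
  have EZ : fderiv ℝ (px z) p (1, u p) = -(px u p * px z p) := by
    have := keylaw u z (fun _ => 0) hu hz contDiff_const
      (fun q => by rw [h3 q]; ring) p
    have h0 : px (fun _ : ℝ × ℝ => (0:ℝ)) p = 0 := by simp [px]
    rw [h0] at this
    linarith [this]
  -- the cleared-denominator identity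
  have hG : (fun q => B q * (2 * (px z q * px z q)))
      = fun q => 2 * px u q * px z q - px v q * px v q := by
    funext q
    have hq := hzx q
    rw [hB]
    field_simp
  -- differentiate both sides of hG at p in direction (1, u p)
  have hdZZ : DifferentiableAt ℝ (fun q => 2 * (px z q * px z q)) p :=
    (hdZ.mul hdZ).const_mul 2
  have lhs : fderiv ℝ (fun q => B q * (2 * (px z q * px z q))) p (1, u p)
      = fderiv ℝ (fun q => 2 * px u q * px z q - px v q * px v q) p (1, u p) := by
    rw [hG]
  rw [fderiv_fun_mul hdB hdZZ] at lhs
  have e1 : fderiv ℝ (fun q => 2 * (px z q * px z q)) p (1, u p)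
      = 2 * (fderiv ℝ (px z) p (1, u p) * px z p + px z p * fderiv ℝ (px z) p (1, u p)) := by
    rw [fderiv_const_mul (hdZ.fun_mul hdZ) 2, fderiv_fun_mul hdZ hdZ]
    simp
    ring
  have e2 : fderiv ℝ (fun q => 2 * px u q * px z q - px v q * px v q) p (1, u p)
      = (2 * px u p * fderiv ℝ (px z) p (1, u p) + px z p * (2 * fderiv ℝ (px u) p (1, u p)))
        - (px v p * fderiv ℝ (px v) p (1, u p) + px v p * fderiv ℝ (px v) p (1, u p)) := by
    rw [fderiv_fun_sub ((hdU.const_mul 2).fun_mul hdZ) (hdV.fun_mul hdV),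
      fderiv_fun_mul (hdU.const_mul 2) hdZ, fderiv_fun_mul hdV hdV,
      fderiv_const_mul hdU 2]
    simp
  simp only [ContinuousLinearMap.add_apply, ContinuousLinearMap.smul_apply, smul_eq_mul] at lhs
  rw [e1, e2, EU, EV, EZ] at lhs
  -- now extract fderiv B p (1, u p) = 0 and conclude
  have hz2 : (2 : ℝ) * (px z p * px z p) ≠ 0 := by
    have := hzx p; positivity
  have hfB : fderiv ℝ B p (1, u p) = 0 := by
    have hBp : B p = px u p / px z p - px v p ^ 2 / (2 * px z p ^ 2) := rfl
    rw [hBp] at lhs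
    have hr : (px u p / px z p - px v p ^ 2 / (2 * px z p ^ 2)) *
        (2 * (-(px u p * px z p) * px z p + px z p * -(px u p * px z p)))
        = (2 * px u p * -(px u p * px z p) + px z p * (2 * (px v p - px u p * px u p)))
          - (px v p * (px z p - px u p * px v p) + px v p * (px z p - px u p * px v p)) := by
      field_simp [hzx p]
      ring
    have hX0 : fderiv ℝ B p (1, u p) * (2 * (px z p * px z p)) = 0 := by
      linarith [lhs, hr]
    exact (mul_eq_zero.mp hX0).resolve_right hz2
  rw [show Dt u B p = fderiv ℝ B p (1, u p) from (dt_dir u B p).symm, hfB]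
end

section
/- Let u, v, z : ℝ² → ℝ be smooth with u_t = v - u·u_x, v_t = z - u·v_x, z_t = -u·z_x, D_t = ∂/∂t + u·∂/∂x, and suppose z ≠ 0 everywhere. Then b₃ := x - u·v/z + v³/(3z²) satisfies D_t b₃ = 0. -/
theorem riemann_N3_b3 (u v z : ℝ × ℝ → ℝ)
    (hu : ContDiff ℝ (⊤ : ℕ∞) u) (hv : ContDiff ℝ (⊤ : ℕ∞) v) (hz : ContDiff ℝ (⊤ : ℕ∞) z)
    (hz0 : ∀ p, z p ≠ 0)
    (h1 : ∀ p, pt u p = v p - u p * px u p)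
    (h2 : ∀ p, pt v p = z p - u p * px v p)
    (h3 : ∀ p, pt z p = -(u p * px z p)) :
    ∀ p, Dt u (fun q => q.2 - u q * v q / z q + v q ^ 3 / (3 * z q ^ 2)) p = 0 := by
  intro p
  have hup : HasFDerivAt u (fderiv ℝ u p) p := (hu.differentiable (by simp) p).hasFDerivAt
  have hvp : HasFDerivAt v (fderiv ℝ v p) p := (hv.differentiable (by simp) p).hasFDerivAt
  have hzp : HasFDerivAt z (fderiv ℝ z p) p := (hz.differentiable (by simp) p).hasFDerivAt
  have hz2 : (3 : ℝ) * z p ^ 2 ≠ 0 :=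
    mul_ne_zero three_ne_zero (pow_ne_zero _ (hz0 p))
  have hfun : (fun q : ℝ × ℝ => q.2 - u q * v q / z q + v q ^ 3 / (3 * z q ^ 2))
      = (fun q : ℝ × ℝ => q.2 - u q * v q * (z q)⁻¹ + v q ^ 3 * (3 * z q ^ 2)⁻¹) := by
    funext q; rw [div_eq_mul_inv, div_eq_mul_inv]
  have hinvz : HasFDerivAt (fun q : ℝ × ℝ => (z q)⁻¹) ((-(z p ^ 2)⁻¹) • fderiv ℝ z p) p :=
    (hasDerivAt_inv (hz0 p)).comp_hasFDerivAt p hzp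
  have hz2d : HasFDerivAt (fun q : ℝ × ℝ => 3 * z q ^ 2)
      ((3 : ℝ) • (((2 : ℕ) * z p ^ 1) • fderiv ℝ z p)) p :=
    ((hasDerivAt_pow 2 (z p)).comp_hasFDerivAt p hzp).const_mul 3
  have hinv3z2 : HasFDerivAt (fun q : ℝ × ℝ => (3 * z q ^ 2)⁻¹)
      ((-((3 * z p ^ 2) ^ 2)⁻¹) • ((3 : ℝ) • (((2 : ℕ) * z p ^ 1) • fderiv ℝ z p))) p :=
    (hasDerivAt_inv hz2).comp_hasFDerivAt p hz2d
  have hv3 : HasFDerivAt (fun q : ℝ × ℝ => v q ^ 3) (((3 : ℕ) * v p ^ 2) • fderiv ℝ v p) p :=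
    (hasDerivAt_pow 3 (v p)).comp_hasFDerivAt p hvp
  have hb := (hasFDerivAt_snd.sub ((hup.mul hvp).mul hinvz)).add (hv3.mul hinv3z2)
  rw [hfun]
  simp only [Dt, pt, px, (show HasFDerivAt (fun q : ℝ × ℝ => q.2 - u q * v q * (z q)⁻¹ + v q ^ 3 * (3 * z q ^ 2)⁻¹) _ p from hb).fderiv]
  simp only [ContinuousLinearMap.add_apply, ContinuousLinearMap.sub_apply,
    ContinuousLinearMap.smul_apply, ContinuousLinearMap.coe_snd', ContinuousLinearMap.neg_apply,
    smul_eq_mul]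
  have e1 := h1 p; have e2 := h2 p; have e3 := h3 p
  simp only [pt, px] at e1 e2 e3
  rw [e1, e2, e3]
  push_cast
  field_simp [hz0 p]
  ring
end

section
/- Let u, v, z : ℝ² → ℝ be smooth with u_t = v - u·u_x, v_t = z - u·v_x, z_t = -u·z_x, D_t = ∂/∂t + u·∂/∂x, and z_x ≠ 0 everywhere. Then r₂ := v_x/z_x - u_x²/(2z_x) satisfies the functional-differential equation D_t r₂ + r₂·u_x = 1. -/
lemma pd_sub (F G : ℝ × ℝ → ℝ) (hF : Differentiable ℝ F) (hG : Differentiable ℝ G)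
    (p w : ℝ × ℝ) :
    fderiv ℝ (fun q => F q - G q) p w = fderiv ℝ F p w - fderiv ℝ G p w := by
  rw [fderiv_fun_sub (hF p) (hG p)]; simp

lemma pd_mul (F G : ℝ × ℝ → ℝ) (hF : Differentiable ℝ F) (hG : Differentiable ℝ G)
    (p w : ℝ × ℝ) :
    fderiv ℝ (fun q => F q * G q) p w = F p * fderiv ℝ G p w + G p * fderiv ℝ F p w := by
  rw [fderiv_fun_mul (hF p) (hG p)]; simp

lemma diff_div (F G : ℝ × ℝ → ℝ) (hF : Differentiable ℝ F) (hG : Differentiable ℝ G)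
    (hG0 : ∀ q, G q ≠ 0) : Differentiable ℝ (fun q => F q / G q) := by
  simp only [div_eq_mul_inv]
  exact hF.mul (fun q => (hG q).inv (hG0 q))

lemma pd_div (F G : ℝ × ℝ → ℝ) (hF : Differentiable ℝ F) (hG : Differentiable ℝ G)
    (hG0 : ∀ q, G q ≠ 0) (p w : ℝ × ℝ) :
    fderiv ℝ (fun q => F q / G q) p w
      = (fderiv ℝ F p w * G p - F p * fderiv ℝ G p w) / G p ^ 2 := by
  have hQ : Differentiable ℝ (fun q => F q / G q) := diff_div F G hF hG hG0
  have h2 : fderiv ℝ F p w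
      = F p / G p * fderiv ℝ G p w + G p * fderiv ℝ (fun q => F q / G q) p w := by
    conv_lhs => rw [show F = fun q => (F q / G q) * G q from funext fun q =>
      (div_mul_cancel₀ (F q) (hG0 q)).symm]
    exact pd_mul (fun q => F q / G q) G hQ hG p w
  have hGp := hG0 p
  rw [eq_div_iff (pow_ne_zero 2 hGp), h2]
  field_simp
  ring

lemma px_sub (F G : ℝ × ℝ → ℝ) (hF : Differentiable ℝ F) (hG : Differentiable ℝ G)
    (p : ℝ × ℝ) : px (fun q => F q - G q) p = px F p - px G p :=
  pd_sub F G hF hG p (0, 1)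

lemma px_mul (F G : ℝ × ℝ → ℝ) (hF : Differentiable ℝ F) (hG : Differentiable ℝ G)
    (p : ℝ × ℝ) : px (fun q => F q * G q) p = F p * px G p + G p * px F p :=
  pd_mul F G hF hG p (0, 1)

lemma px_neg (F : ℝ × ℝ → ℝ) (p : ℝ × ℝ) : px (fun q => -F q) p = -px F p := by
  show fderiv ℝ (fun q => -F q) p (0, 1) = -(fderiv ℝ F p (0, 1))
  rw [fderiv_fun_neg]; simp

lemma Dt_sub (u F G : ℝ × ℝ → ℝ) (hF : Differentiable ℝ F) (hG : Differentiable ℝ G)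
    (p : ℝ × ℝ) : Dt u (fun q => F q - G q) p = Dt u F p - Dt u G p := by
  simp only [Dt, pt, px, pd_sub F G hF hG]; ring

lemma Dt_mul (u F G : ℝ × ℝ → ℝ) (hF : Differentiable ℝ F) (hG : Differentiable ℝ G)
    (p : ℝ × ℝ) : Dt u (fun q => F q * G q) p = F p * Dt u G p + G p * Dt u F p := by
  simp only [Dt, pt, px, pd_mul F G hF hG]; ring

lemma Dt_div (u F G : ℝ × ℝ → ℝ) (hF : Differentiable ℝ F) (hG : Differentiable ℝ G)
    (hG0 : ∀ q, G q ≠ 0) (p : ℝ × ℝ) :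
    Dt u (fun q => F q / G q) p = (Dt u F p * G p - F p * Dt u G p) / G p ^ 2 := by
  simp only [Dt, pt, px, pd_div F G hF hG hG0]; ring

lemma Dt_const (u : ℝ × ℝ → ℝ) (c : ℝ) (p : ℝ × ℝ) : Dt u (fun _ => c) p = 0 := by
  simp [Dt, pt, px]

lemma contDiff_pd (f : ℝ × ℝ → ℝ) (hf : ContDiff ℝ (⊤ : ℕ∞) f) (w : ℝ × ℝ) :
    ContDiff ℝ (⊤ : ℕ∞) (fun p => fderiv ℝ f p w) :=
  (hf.fderiv_right (by simp)).clm_apply contDiff_const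

lemma pt_px_comm (f : ℝ × ℝ → ℝ) (hf : ContDiff ℝ (⊤ : ℕ∞) f) (p : ℝ × ℝ) :
    pt (px f) p = px (pt f) p := by
  have hd : Differentiable ℝ (fderiv ℝ f) :=
    (hf.fderiv_right (m := (⊤ : ℕ∞)) (by simp)).differentiable (by simp)
  have e : ∀ w₁ w₂ : ℝ × ℝ,
      fderiv ℝ (fun q => fderiv ℝ f q w₂) p w₁ = fderiv ℝ (fderiv ℝ f) p w₁ w₂ := by
    intro w₁ w₂
    rw [fderiv_clm_apply (hd p) (differentiableAt_const w₂)]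
    simp
  have hca : ContDiffAt ℝ (⊤ : ℕ∞) f p := hf.contDiffAt
  have hsymm := (hca.isSymmSndFDerivAt (by simp only [minSmoothness_of_isRCLikeNormedField]; exact WithTop.coe_le_coe.mpr (le_top : (2 : ℕ∞) ≤ ⊤))).eq (1, 0) (0, 1)
  show fderiv ℝ (fun q => fderiv ℝ f q (0, 1)) p (1, 0)
      = fderiv ℝ (fun q => fderiv ℝ f q (1, 0)) p (0, 1)
  rw [e, e, hsymm]

theorem riemann_N3_r2 (u v z : ℝ × ℝ → ℝ)
    (hu : ContDiff ℝ (⊤ : ℕ∞) u) (hv : ContDiff ℝ (⊤ : ℕ∞) v) (hz : ContDiff ℝ (⊤ : ℕ∞) z)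
    (hzx : ∀ p, px z p ≠ 0)
    (h1 : ∀ p, pt u p = v p - u p * px u p)
    (h2 : ∀ p, pt v p = z p - u p * px v p)
    (h3 : ∀ p, pt z p = -(u p * px z p)) :
    ∀ p, Dt u (fun q => px v q / px z q - px u q ^ 2 / (2 * px z q)) p
        + (px v p / px z p - px u p ^ 2 / (2 * px z p)) * px u p = 1 := by
  have hud : Differentiable ℝ u := hu.differentiable (by simp)
  have hvd : Differentiable ℝ v := hv.differentiable (by simp)
  have hzd : Differentiable ℝ z := hz.differentiable (by simp)
  have hux : Differentiable ℝ (px u) := (contDiff_pd u hu (0,1)).differentiable (by simp)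
  have hvx : Differentiable ℝ (px v) := (contDiff_pd v hv (0,1)).differentiable (by simp)
  have hzxd : Differentiable ℝ (px z) := (contDiff_pd z hz (0,1)).differentiable (by simp)
  -- the three evolution identities for the x-derivatives
  have key_u : ∀ p, Dt u (px u) p = px v p - px u p ^ 2 := by
    intro p
    have e1 : pt (px u) p = px (pt u) p := pt_px_comm u hu p
    have e2 : px (pt u) p = px v p - (u p * px (px u) p + px u p * px u p) := by
      rw [funext h1, px_sub v (fun r => u r * px u r) hvd (hud.mul hux) p,
        px_mul u (px u) hud hux p]
    show pt (px u) p + u p * px (px u) p = _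
    rw [e1, e2]; ring
  have key_v : ∀ p, Dt u (px v) p = px z p - px u p * px v p := by
    intro p
    have e1 : pt (px v) p = px (pt v) p := pt_px_comm v hv p
    have e2 : px (pt v) p = px z p - (u p * px (px v) p + px v p * px u p) := by
      rw [funext h2, px_sub z (fun r => u r * px v r) hzd (hud.mul hvx) p,
        px_mul u (px v) hud hvx p]
    show pt (px v) p + u p * px (px v) p = _
    rw [e1, e2]; ring
  have key_z : ∀ p, Dt u (px z) p = -(px u p * px z p) := by
    intro p
    have e1 : pt (px z) p = px (pt z) p := pt_px_comm z hz p
    have e2 : px (pt z) p = -(u p * px (px z) p + px z p * px u p) := by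
      have h3' : pt z = fun r => -(u r * px z r) := funext h3
      rw [h3', px_neg (fun r => u r * px z r) p, px_mul u (px z) hud hzxd p]
    show pt (px z) p + u p * px (px z) p = _
    rw [e1, e2]; ring
  intro p
  have hF1 : Differentiable ℝ (fun q => px v q / px z q) :=
    diff_div (px v) (px z) hvx hzxd hzx
  have hsq : Differentiable ℝ (fun q => px u q ^ 2) := by
    have h : (fun q => px u q ^ 2) = fun q => px u q * px u q := by funext q; ring
    rw [h]; exact hux.mul hux
  have h2z : Differentiable ℝ (fun q => 2 * px z q) :=
    (differentiable_const (2:ℝ)).mul hzxd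
  have h2z0 : ∀ q, 2 * px z q ≠ 0 := fun q => mul_ne_zero two_ne_zero (hzx q)
  have hF2 : Differentiable ℝ (fun q => px u q ^ 2 / (2 * px z q)) :=
    diff_div _ _ hsq h2z h2z0
  have E0 : Dt u (fun q => px v q / px z q - px u q ^ 2 / (2 * px z q)) p
      = Dt u (fun q => px v q / px z q) p - Dt u (fun q => px u q ^ 2 / (2 * px z q)) p :=
    Dt_sub u (fun q => px v q / px z q) (fun q => px u q ^ 2 / (2 * px z q)) hF1 hF2 p
  have E1 : Dt u (fun q => px v q / px z q) p
      = (Dt u (px v) p * px z p - px v p * Dt u (px z) p) / px z p ^ 2 :=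
    Dt_div u (px v) (px z) hvx hzxd hzx p
  have Esq : Dt u (fun q => px u q ^ 2) p = 2 * px u p * Dt u (px u) p := by
    have h : (fun q => px u q ^ 2) = fun q => px u q * px u q := by funext q; ring
    rw [h, Dt_mul u (px u) (px u) hux hux p]; ring
  have Eden : Dt u (fun q => 2 * px z q) p = 2 * Dt u (px z) p := by
    rw [Dt_mul u (fun _ => (2:ℝ)) (px z) (differentiable_const _) hzxd p, Dt_const]; ring
  have E2 : Dt u (fun q => px u q ^ 2 / (2 * px z q)) p
      = (Dt u (fun q => px u q ^ 2) p * (2 * px z p)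
          - px u p ^ 2 * Dt u (fun q => 2 * px z q) p) / (2 * px z p) ^ 2 :=
    Dt_div u (fun q => px u q ^ 2) (fun q => 2 * px z q) hsq h2z h2z0 p
  rw [E0, E1, E2, Esq, Eden, key_u p, key_v p, key_z p]
  have hc := hzx p
  field_simp
  ring
end

section
/- Let u, v, z : ℝ² → ℝ be smooth and λ ∈ ℝ. Define the 3×3 matrix-valued functions ℓ = [[λu_x, -v_x, z_x],[3λ², -2λu_x, λv_x],[6λ²r, -3λ, λu_x]] and q(λ) = [[0,0,0],[λ,0,0],[0,1,0]], where r : ℝ² → ℝ is smooth. If the entries satisfy D_t u_x = v_x - u_x², D_t v_x = z_x - u_x v_x, D_t z_x = -u_x z_x, and D_t r + r·u_x = 1, then ℓ satisfies the matrix equation D_t ℓ + u_x·ℓ = q(λ)·ℓ - ℓ·q(λ), where D_t is applied entrywise. -/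
noncomputable def ellN3 (u v z r : ℝ × ℝ → ℝ) (lam : ℝ) (p : ℝ × ℝ) :
    Matrix (Fin 3) (Fin 3) ℝ :=
  !![lam * px u p, -px v p, px z p;
     3 * lam ^ 2, -2 * lam * px u p, lam * px v p;
     6 * lam ^ 2 * r p, -3 * lam, lam * px u p]

noncomputable def qN3 (lam : ℝ) : Matrix (Fin 3) (Fin 3) ℝ :=
  !![0, 0, 0; lam, 0, 0; 0, 1, 0]

lemma Dt_cmul {u f : ℝ × ℝ → ℝ} {p : ℝ × ℝ} (c : ℝ) (hf : DifferentiableAt ℝ f p) :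
    Dt u (fun q => c * f q) p = c * Dt u f p := by
  simp only [Dt, pt, px, fderiv_const_mul hf c]
  simp; ring

lemma Dt_neg {u f : ℝ × ℝ → ℝ} {p : ℝ × ℝ} (hf : DifferentiableAt ℝ f p) :
    Dt u (fun q => -f q) p = -Dt u f p := by
  simp only [Dt, pt, px, fderiv_neg]
  simp; ring

lemma Dt_cst (u : ℝ × ℝ → ℝ) (p : ℝ × ℝ) (c : ℝ) :
    Dt u (fun _ => c) p = 0 := by
  simp [Dt, pt, px]

lemma px_diff {f : ℝ × ℝ → ℝ} (hf : ContDiff ℝ (⊤ : ℕ∞) f) (p : ℝ × ℝ) :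
    DifferentiableAt ℝ (px f) p := by
  have : ContDiff ℝ (⊤ : ℕ∞) (px f) := by
    exact (hf.fderiv_right (by simp)).clm_apply contDiff_const
  exact this.differentiable (by simp) p

theorem ell_determining_equation_N3 (u v z r : ℝ × ℝ → ℝ) (lam : ℝ)
    (hu : ContDiff ℝ (⊤ : ℕ∞) u) (hv : ContDiff ℝ (⊤ : ℕ∞) v) (hz : ContDiff ℝ (⊤ : ℕ∞) z)
    (hr : ContDiff ℝ (⊤ : ℕ∞) r)
    (h1 : ∀ p, Dt u (px u) p = px v p - px u p ^ 2)
    (h2 : ∀ p, Dt u (px v) p = px z p - px u p * px v p)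
    (h3 : ∀ p, Dt u (px z) p = -(px u p * px z p))
    (h4 : ∀ p, Dt u r p + r p * px u p = 1) :
    ∀ p (i j : Fin 3),
      Dt u (fun q => ellN3 u v z r lam q i j) p + px u p * ellN3 u v z r lam p i j
        = (qN3 lam * ellN3 u v z r lam p - ellN3 u v z r lam p * qN3 lam) i j := by
  intro p i j
  have hux := px_diff hu p
  have hvx := px_diff hv p
  have hzx := px_diff hz p
  have hrd : DifferentiableAt ℝ r p := hr.differentiable (by simp) p
  have e1 := h1 p; have e2 := h2 p; have e3 := h3 p; have e4 := h4 p
  fin_cases i <;> fin_cases j <;>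
    simp only [ellN3, qN3] <;>
    simp [Matrix.mul_apply, Fin.sum_univ_succ, Matrix.vecHead, Matrix.vecTail] <;>
  [ rw [Dt_cmul lam hux, e1]; rw [Dt_neg hvx, e2]; rw [e3];
    rw [Dt_cst]; rw [Dt_neg (hux.const_mul (2*lam)), Dt_cmul (2*lam) hux, e1];
    rw [Dt_cmul lam hvx, e2];
    rw [Dt_cmul (6*lam^2) hrd, show Dt u r p = 1 - r p * px u p by linarith];
    rw [Dt_cst]; rw [Dt_cmul lam hux, e1] ] <;>
  ring
end
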